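/- arXiv:math/9912243 — 3 statements merged into one kernel-verified Lean document; each statement's English description precedes it below -/
import Mathlib

section
/- Let 𝔤 be a finite-dimensional Lie algebra over a field k with a nondegenerate symmetric invariant bilinear form ⟨,⟩ (invariance: ⟨[x,y],z⟩ = ⟨x,[y,z]⟩ for all x,y,z). Let 𝔥 ⊆ 𝔤 be a Lie subalgebra that is Lagrangian, let L be a Lagrangian subspace with 𝔤 = 𝔥 ⊕ L, let p_𝔥 be the projection onto 𝔥 along L, and set r_{𝔥,L} := (p_𝔥 ⊗ id)(t). Then for every x ∈ 𝔥, the element (ad x ⊗ id + id ⊗ ad x)(r_{𝔥,L}) of 𝔤 ⊗ 𝔤 lies in the subspace 𝔥 ⊗ 𝔥. -/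
open TensorProduct

variable (k : Type*) [Field k]
variable (g : Type*) [LieRing g] [LieAlgebra k g]

/-- The subspace `U ⊗ V` of `g ⊗ g` spanned by elementary tensors `u ⊗ v`, `u ∈ U`, `v ∈ V`. -/
def tsub (U V : Submodule k g) : Submodule k (g ⊗[k] g) :=
  Submodule.span k {z | ∃ u ∈ U, ∃ v ∈ V, z = u ⊗ₜ[k] v}

/-- A subspace is Lagrangian when it equals its own orthogonal complement. -/
def IsLagrangian (B : g →ₗ[k] g →ₗ[k] k) (W : Submodule k g) : Prop :=
  ∀ x : g, x ∈ W ↔ ∀ w ∈ W, B w x = 0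

/-- The contraction `(⟨x,·⟩ ⊗ id)(t)` of a 2-tensor against `x` in the first factor. -/
noncomputable def contractFst (B : g →ₗ[k] g →ₗ[k] k) (x : g) : g ⊗[k] g →ₗ[k] g :=
  (TensorProduct.lid k g).toLinearMap ∘ₗ TensorProduct.map (B x) LinearMap.id

/-! Since `𝔥` and `L` are Lagrangian, `p_𝔥` is adjoint to `1 - p_𝔥`, so contracting
`r = (p_𝔥 ⊗ 1) t` against `y` in the first factor gives `y - p_𝔥 y`. For `x ∈ 𝔥` the tensor
`m = (ad x ⊗ 1 + 1 ⊗ ad x) r` has its first factors in `𝔥` (as `𝔥` is a subalgebra), and by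
invariance its contraction against `y` is `-(p_𝔥 [y, x] + [x, p_𝔥 y]) ∈ 𝔥`. A tensor is determined
by these contractions (nondegeneracy), so `m` is also fixed by `1 ⊗ p_𝔥`, i.e. `m ∈ 𝔥 ⊗ 𝔥`. -/

theorem Submodule.eq_projection_of_isCompl {R V : Type*} [Ring R] [AddCommGroup V] [Module R V]
    {U W : Submodule R V} (h : IsCompl U W) {p : V →ₗ[R] V}
    (hU : ∀ x ∈ U, p x = x) (hW : ∀ x ∈ W, p x = 0) : p = U.projection W h := by
  ext x
  conv_lhs => rw [← Submodule.projection_add_projection_eq_self h x]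
  rw [map_add, hU _ (Submodule.projection_apply_mem h x),
    hW _ (Submodule.projection_apply_mem h.symm x), add_zero]

theorem apply_projection_eq_of_isotropic {R V : Type*} [CommRing R] [AddCommGroup V]
    [Module R V] {U W : Submodule R V} (h : IsCompl U W) {B : V →ₗ[R] V →ₗ[R] R}
    (hU : ∀ a ∈ U, ∀ b ∈ U, B a b = 0) (hW : ∀ a ∈ W, ∀ b ∈ W, B a b = 0) (u v : V) :
    B u (U.projection W h v) = B (W.projection U h.symm u) v := by
  set P := U.projection W h
  set Q := W.projection U h.symm
  have hu : P u + Q u = u := Submodule.projection_add_projection_eq_self h u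
  have hv : P v + Q v = v := Submodule.projection_add_projection_eq_self h v
  calc B u (P v) = B (P u) (P v) + B (Q u) (P v) := by
        rw [← LinearMap.add_apply, ← map_add, hu]
    _ = B (Q u) (P v) + B (Q u) (Q v) := by
      rw [hU _ (Submodule.projection_apply_mem h u) _ (Submodule.projection_apply_mem h v),
        hW _ (Submodule.projection_apply_mem h.symm u) _ (Submodule.projection_apply_mem h.symm v)]
      ring
    _ = B (Q u) v := by rw [← map_add, hv]

section Contraction

variable {k g} {B : g →ₗ[k] g →ₗ[k] k}

theorem IsLagrangian.apply_eq_zero {W : Submodule k g} (hW : IsLagrangian k g B W) {a b : g}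
    (ha : a ∈ W) (hb : b ∈ W) : B a b = 0 :=
  (hW b).1 hb a ha

@[simp]
theorem contractFst_tmul (y u v : g) : contractFst k g B y (u ⊗ₜ v) = B y u • v := by
  simp [contractFst]

theorem contractFst_map_id_left {y y' : g} {f : g →ₗ[k] g} (hf : ∀ u, B y (f u) = B y' u)
    (w : g ⊗[k] g) : contractFst k g B y (map f .id w) = contractFst k g B y' w := by
  induction w using TensorProduct.induction_on with
  | zero => simp
  | tmul u v => simp [hf]
  | add w w' hw hw' => simp only [map_add, hw, hw']

theorem contractFst_map_id_right (y : g) (f : g →ₗ[k] g) (w : g ⊗[k] g) :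
    contractFst k g B y (map .id f w) = f (contractFst k g B y w) := by
  induction w using TensorProduct.induction_on with
  | zero => simp
  | tmul u v => simp
  | add w w' hw hw' => simp only [map_add, hw, hw']

theorem eq_of_forall_contractFst_eq [FiniteDimensional k g] (hB : B.SeparatingRight)
    {w w' : g ⊗[k] g} (h : ∀ y, contractFst k g B y w = contractFst k g B y w') : w = w' := by
  -- `w ↦ (y ↦ contractFst y w)` factors as `g ⊗ g → g* ⊗ g ≃ Hom(g, g)` through `B.flip ⊗ id`
  have hfactor : ∀ w y, dualTensorHom k g g (B.flip.rTensor g w) y = contractFst k g B y w := by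
    intro w y
    induction w using TensorProduct.induction_on with
    | zero => simp
    | tmul u v => simp [dualTensorHom_apply]
    | add w w' hw hw' => simp only [map_add, LinearMap.add_apply, hw, hw']
  have hflip : Function.Injective B.flip :=
    LinearMap.ker_eq_bot.mp (LinearMap.separatingRight_iff_flip_ker_eq_bot.mp hB)
  apply (Module.Flat.rTensor_preserves_injective_linearMap B.flip hflip)
  apply (dualTensorHom_bijective (R := k) (M := g) (N := g)).injective
  ext y
  rw [hfactor, hfactor, h]

theorem range_map_le_tsub {U V : Submodule k g} {f h : g →ₗ[k] g} (hf : ∀ u, f u ∈ U)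
    (hh : ∀ v, h v ∈ V) : LinearMap.range (map f h) ≤ tsub k g U V := by
  rw [range_map_eq_span_tmul]
  exact Submodule.span_mono fun _ ⟨u, v, huv⟩ => ⟨f u, hf u, h v, hh v, huv.symm⟩

theorem mem_tsub_of_contractFst_mem [FiniteDimensional k g] (hB : B.SeparatingRight)
    {U W : Submodule k g} (hUW : IsCompl U W) {w : g ⊗[k] g}
    (hfst : map (U.projection W hUW) .id w = w) (hsnd : ∀ y, contractFst k g B y w ∈ U) :
    w ∈ tsub k g U U := by
  set P := U.projection W hUW
  have hsnd' : map .id P w = w := eq_of_forall_contractFst_eq hB fun y => by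
    rw [contractFst_map_id_right, Submodule.projection_apply_of_mem_left hUW (hsnd y)]
  have hPP : map P P w = w :=
    calc map P P w = map P .id (map .id P w) := by
          rw [map_map, LinearMap.comp_id, LinearMap.id_comp]
      _ = w := by rw [hsnd', hfst]
  rw [← hPP]
  exact range_map_le_tsub (Submodule.projection_apply_mem hUW)
    (Submodule.projection_apply_mem hUW) (LinearMap.mem_range_self _ w)

theorem contractFst_map_projection_id {U W : Submodule k g} (hU : IsLagrangian k g B U)
    (hW : IsLagrangian k g B W) (h : IsCompl U W) {t : g ⊗[k] g}
    (ht : ∀ x, contractFst k g B x t = x) (z : g) :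
    contractFst k g B z (map (U.projection W h) .id t) = z - U.projection W h z := by
  rw [contractFst_map_id_left (apply_projection_eq_of_isotropic h
    (fun _ ha _ hb => hU.apply_eq_zero ha hb) (fun _ ha _ hb => hW.apply_eq_zero ha hb) z),
    ht, Submodule.projection_eq_self_sub_projection]

end Contraction

theorem stmt6 [FiniteDimensional k g] (B : g →ₗ[k] g →ₗ[k] k)
    (hsymm : ∀ x y : g, B x y = B y x)
    (hnondeg : ∀ x : g, (∀ y : g, B x y = 0) → x = 0)
    -- invariance of the bilinear form
    (hinvar : ∀ x y z : g, B ⁅x, y⁆ z = B x ⁅y, z⁆)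
    -- `t` is the canonical element of `B`
    (t : g ⊗[k] g) (ht : ∀ x : g, contractFst k g B x t = x)
    -- `𝔥` a Lagrangian Lie subalgebra, `L` a Lagrangian complement
    (H : LieSubalgebra k g) (hH : IsLagrangian k g B H.toSubmodule)
    (L : Submodule k g) (hL : IsLagrangian k g B L)
    (hcompl : IsCompl H.toSubmodule L)
    -- `p_𝔥` the projection onto `𝔥` along `L`
    (pH : g →ₗ[k] g) (hpH1 : ∀ x ∈ H, pH x = x) (hpH2 : ∀ x ∈ L, pH x = 0) :
    -- for `x ∈ 𝔥`, `(ad x ⊗ id + id ⊗ ad x)(r_{𝔥,L}) ∈ 𝔥 ⊗ 𝔥`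
    ∀ x ∈ H,
      (TensorProduct.map (LieAlgebra.ad k g x : g →ₗ[k] g) LinearMap.id +
          TensorProduct.map LinearMap.id (LieAlgebra.ad k g x : g →ₗ[k] g) :
            g ⊗[k] g →ₗ[k] g ⊗[k] g)
        (TensorProduct.map pH LinearMap.id t) ∈
        tsub k g H.toSubmodule H.toSubmodule := by
  intro x hx
  obtain rfl := Submodule.eq_projection_of_isCompl hcompl hpH1 hpH2
  set P := H.toSubmodule.projection L hcompl
  set A := (LieAlgebra.ad k g x : g →ₗ[k] g)
  have hsep : B.SeparatingRight := fun u hu => hnondeg u fun y => hsymm u y ▸ hu y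
  have hPA : ∀ u, A (P u) ∈ H := fun u => H.lie_mem hx (Submodule.projection_apply_mem hcompl u)
  apply mem_tsub_of_contractFst_mem hsep hcompl
  · have hcomm : map P .id ∘ₗ (map A .id + map .id A) ∘ₗ map P .id =
        (map A .id + map .id A) ∘ₗ map P .id := TensorProduct.ext' fun u v => by
      simp only [LinearMap.comp_apply, LinearMap.add_apply, map_add, map_tmul, LinearMap.id_apply]
      rw [hpH1 _ (hPA u), hpH1 _ (Submodule.projection_apply_mem hcompl u)]
    exact LinearMap.congr_fun hcomm t
  · intro y
    have hA : ∀ u, B y (A u) = B ⁅y, x⁆ u := fun u => (hinvar y x u).symm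
    rw [LinearMap.add_apply, map_add, contractFst_map_id_left hA, contractFst_map_id_right,
      contractFst_map_projection_id hH hL hcompl ht, contractFst_map_projection_id hH hL hcompl ht]
    have hval : ⁅y, x⁆ - P ⁅y, x⁆ + A (y - P y) = -(P ⁅y, x⁆ + A (P y)) := by
      simp only [A, LieAlgebra.ad_apply, lie_sub, ← lie_skew y x]
      abel
    rw [hval]
    exact neg_mem (add_mem (Submodule.projection_apply_mem hcompl _) (hPA y))
end

section
/- Under the standing assumptions on (A, B, F), let A₊ ⊆ A be a subalgebra with Δ(A₊) ⊆ A₊ ⊗̄ A₊, and define I := {ℓ ∈ (A*)^B : ℓ(a₊) = 0 for all a₊ ∈ A₊}. Then I is preserved by the action of A₊: for every a ∈ A₊ and ℓ ∈ I, the linear form a • ℓ (defined by (a • ℓ)(a') = ℓ(a·a')) again lies in I. Consequently, whenever I is moreover a two-sided ideal of ((A*)^B, *), the quotient (A*)^B / I inherits an algebra structure and an action of A₊^op satisfying a • (x·y) = Σᵢ (aᵢ⁽¹⁾ • x)·(aᵢ⁽²⁾ • y) for Δ(a) = Σᵢ aᵢ⁽¹⁾ ⊗ aᵢ⁽²⁾,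 making it an algebra-module over (A₊^op, Δ). -/
open TensorProduct

variable (k A : Type*) [CommRing k] [Ring A] [Bialgebra k A]

/-- The submodule `X ⊗̄ Y` of `A ⊗ A` spanned by elementary tensors from `X` and `Y`. -/
def tens2 (X Y : Set A) : Submodule k (A ⊗[k] A) :=
  Submodule.span k {z | ∃ x ∈ X, ∃ y ∈ Y, z = x ⊗ₜ[k] y}

/-- The submodule `X ⊗̄ Y ⊗̄ Z` of `(A ⊗ A) ⊗ A`. -/
def tens3 (X Y Z : Set A) : Submodule k ((A ⊗[k] A) ⊗[k] A) :=
  Submodule.span k {w | ∃ x ∈ X, ∃ y ∈ Y, ∃ z ∈ Z, w = (x ⊗ₜ[k] y) ⊗ₜ[k] z}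

/-- `ℓ ⊗ ℓ'` as a linear form on `A ⊗ A` (composite `A ⊗ A → k ⊗ k ≅ k`). -/
noncomputable def pairForm (ℓ ℓ' : A →ₗ[k] k) : A ⊗[k] A →ₗ[k] k :=
  (TensorProduct.lid k k).toLinearMap ∘ₗ TensorProduct.map ℓ ℓ'

/-- The twisted product `(ℓ * ℓ')(a) = (ℓ ⊗ ℓ')(Δ(a)·F⁻¹)`, where `Finv = F⁻¹`. -/
noncomputable def starProd (Finv : A ⊗[k] A) (ℓ ℓ' : A →ₗ[k] k) : A →ₗ[k] k :=
  pairForm k A ℓ ℓ' ∘ₗ LinearMap.mulRight k Finv ∘ₗ Coalgebra.comul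

/-- `(A*)^B`: the right `B`-invariant linear forms on `A`. -/
def invForms (S : Set A) : Set (A →ₗ[k] k) :=
  {ℓ | ∀ a : A, ∀ b ∈ S, ℓ (a * b) = ℓ a * Coalgebra.counit (R := k) b}

/-- `Δ ⊗ id` as a map `A ⊗ A → (A ⊗ A) ⊗ A`. -/
noncomputable def DeltaId : A ⊗[k] A →ₗ[k] (A ⊗[k] A) ⊗[k] A :=
  TensorProduct.map Coalgebra.comul LinearMap.id

/-- `id ⊗ Δ` as a map `A ⊗ A → (A ⊗ A) ⊗ A` (reassociated). -/
noncomputable def IdDelta : A ⊗[k] A →ₗ[k] (A ⊗[k] A) ⊗[k] A :=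
  (TensorProduct.assoc k A A A).symm.toLinearMap ∘ₗ
    TensorProduct.map LinearMap.id Coalgebra.comul

/-- `1 ⊗ x` as an element of `(A ⊗ A) ⊗ A`, for `x : A ⊗ A`. -/
noncomputable def oneTens (x : A ⊗[k] A) : (A ⊗[k] A) ⊗[k] A :=
  (TensorProduct.assoc k A A A).symm ((1 : A) ⊗ₜ[k] x)

/-- `Φ_B = (F⊗1)·((Δ⊗id)F)·((1⊗F)·((id⊗Δ)F))⁻¹`, written using `F⁻¹ = Finv`. -/
noncomputable def PhiB (F Finv : A ⊗[k] A) : (A ⊗[k] A) ⊗[k] A :=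
  (F ⊗ₜ[k] (1 : A)) * DeltaId k A F * IdDelta k A Finv * oneTens k A Finv

/-- The action `(a • ℓ)(a') = ℓ(a·a')`. -/
noncomputable def act (a : A) (ℓ : A →ₗ[k] k) : A →ₗ[k] k :=
  ℓ ∘ₗ LinearMap.mulLeft k a

section

variable {k A}

theorem act_apply (a : A) (ℓ : A →ₗ[k] k) (x : A) : act k A a ℓ x = ℓ (a * x) := rfl

theorem act_mem_invForms {S : Set A} (a : A) {ℓ : A →ₗ[k] k} (hℓ : ℓ ∈ invForms k A S) :
    act k A a ℓ ∈ invForms k A S := fun x b hb => by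
  simpa only [act_apply, mul_assoc] using hℓ (a * x) b hb

theorem zero_mem_invForms (S : Set A) : (0 : A →ₗ[k] k) ∈ invForms k A S := fun _ _ _ => by
  simp

theorem pairForm_tmul_mul (a1 a2 : A) (ℓ ℓ' : A →ₗ[k] k) (z : A ⊗[k] A) :
    pairForm k A ℓ ℓ' ((a1 ⊗ₜ[k] a2) * z) =
      pairForm k A (act k A a1 ℓ) (act k A a2 ℓ') z := by
  induction z using TensorProduct.induction_on with
  | zero => simp
  | tmul u v => simp [pairForm, act, Algebra.TensorProduct.tmul_mul_tmul]
  | add x y hx hy => simp only [mul_add, map_add, hx, hy]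

/-- The module-algebra identity holds exactly, not only modulo `I`: in `Δ(a a') F⁻¹ = Δ(a) Δ(a') F⁻¹`
the twist sits on the right, away from the factor `Δ(a)`. -/
theorem act_starProd_eq_sum (Finv : A ⊗[k] A) (ℓ ℓ' : A →ₗ[k] k) {a : A} {ι : Type*}
    {s : Finset ι} {a1 a2 : ι → A} (hΔ : Coalgebra.comul (R := k) a = ∑ i ∈ s, a1 i ⊗ₜ[k] a2 i) :
    act k A a (starProd k A Finv ℓ ℓ') =
      ∑ i ∈ s, starProd k A Finv (act k A (a1 i) ℓ) (act k A (a2 i) ℓ') := by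
  ext x
  simp only [act_apply, starProd, LinearMap.comp_apply, LinearMap.mulRight_apply,
    LinearMap.coe_sum, Finset.sum_apply]
  rw [Bialgebra.comul_mul, hΔ, Finset.sum_mul, Finset.sum_mul, map_sum]
  simp only [mul_assoc, pairForm_tmul_mul]

end

theorem stmt10 (B Ap : Subalgebra k A) (Finv : A ⊗[k] A) :
    -- `I := {ℓ ∈ (A*)^B : ℓ vanishes on A₊}` is preserved by the action of `A₊`:
    (∀ a ∈ Ap, ∀ ℓ ∈ invForms k A (B : Set A), (∀ x ∈ Ap, ℓ x = 0) →
      (act k A a ℓ ∈ invForms k A (B : Set A) ∧ ∀ x ∈ Ap, act k A a ℓ x = 0)) ∧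
    -- consequently, whenever `I` is moreover a two-sided ideal of `((A*)^B, *)`,
    ((∀ ℓ ∈ invForms k A (B : Set A), (∀ x ∈ Ap, ℓ x = 0) →
        ∀ ℓ' ∈ invForms k A (B : Set A),
          (starProd k A Finv ℓ ℓ' ∈ invForms k A (B : Set A) ∧
            (∀ x ∈ Ap, starProd k A Finv ℓ ℓ' x = 0) ∧
            starProd k A Finv ℓ' ℓ ∈ invForms k A (B : Set A) ∧
            (∀ x ∈ Ap, starProd k A Finv ℓ' ℓ x = 0))) →
      -- the induced action on the quotient `(A*)^B / I` satisfies the module-algebra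
      -- identity `a • (x·y) = Σᵢ (aᵢ⁽¹⁾ • x)·(aᵢ⁽²⁾ • y)` (equality modulo `I`, i.e.,
      -- both sides agree after evaluation at every element of `A₊`... indeed the
      -- difference lies in `I`):
      (∀ a ∈ Ap, ∀ ℓ ∈ invForms k A (B : Set A), ∀ ℓ' ∈ invForms k A (B : Set A),
        ∀ (ι : Type) (s : Finset ι) (a1 a2 : ι → A),
          (∀ i ∈ s, a1 i ∈ Ap ∧ a2 i ∈ Ap) →
          Coalgebra.comul (R := k) a = ∑ i ∈ s, a1 i ⊗ₜ[k] a2 i →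
          (act k A a (starProd k A Finv ℓ ℓ') -
              ∑ i ∈ s, starProd k A Finv (act k A (a1 i) ℓ) (act k A (a2 i) ℓ')
            ∈ invForms k A (B : Set A) ∧
          ∀ x ∈ Ap,
            (act k A a (starProd k A Finv ℓ ℓ') -
              ∑ i ∈ s, starProd k A Finv (act k A (a1 i) ℓ) (act k A (a2 i) ℓ')) x = 0))) := by
  refine ⟨fun a ha ℓ hℓ hvan => ⟨act_mem_invForms a hℓ, fun x hx => hvan _ (Ap.mul_mem ha hx)⟩, ?_⟩
  intro _ a _ ℓ _ ℓ' _ ι s a1 a2 _ hΔ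
  rw [act_starProd_eq_sum Finv ℓ ℓ' hΔ, sub_self]
  exact ⟨zero_mem_invForms _, fun _ _ => rfl⟩
end

section
/- Under the standing assumptions on (A, B, F), let F₀ ∈ A ⊗ A be invertible with both F₀ and F₀⁻¹ in B ⊗̄ B, and with (ε ⊗ id)(F₀) = 1 and (id ⊗ ε)(F₀) = 1. Then the products on (A*)^B defined by F and by F₀·F coincide: for all ℓ, ℓ' ∈ (A*)^B and all a ∈ A, (ℓ ⊗ ℓ')(Δ(a)·(F₀·F)⁻¹) = (ℓ ⊗ ℓ')(Δ(a)·F⁻¹). -/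
open TensorProduct

variable (k A : Type*) [CommRing k] [Ring A] [Bialgebra k A]

lemma pairForm_mul_mem (B : Subalgebra k A) (ℓ ℓ' : A →ₗ[k] k)
    (hℓ : ℓ ∈ invForms k A (B : Set A)) (hℓ' : ℓ' ∈ invForms k A (B : Set A))
    (w : A ⊗[k] A) (hw : w ∈ tens2 k A (B : Set A) (B : Set A)) (x : A ⊗[k] A) :
    pairForm k A ℓ ℓ' (x * w)
      = pairForm k A ℓ ℓ' x *
        pairForm k A (Coalgebra.counit (R := k)) (Coalgebra.counit (R := k)) w := by
  induction hw using Submodule.span_induction with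
  | mem w hw =>
    obtain ⟨b, hb, b', hb', rfl⟩ := hw
    induction x using TensorProduct.induction_on with
    | zero => simp
    | tmul a a' =>
      simp only [Algebra.TensorProduct.tmul_mul_tmul, pairForm, LinearMap.coe_comp,
        LinearEquiv.coe_coe, Function.comp_apply, TensorProduct.map_tmul,
        TensorProduct.lid_tmul, smul_eq_mul]
      rw [hℓ a b hb, hℓ' a' b' hb']
      ring
    | add x y hx hy => rw [add_mul, map_add, hx, hy, map_add, add_mul]
  | zero => simp
  | add w₁ w₂ _ _ h1 h2 => rw [mul_add, map_add, h1, h2, map_add, mul_add]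
  | smul c w _ h => rw [mul_smul_comm, map_smul, h, map_smul]; simp [smul_eq_mul]; ring

lemma counit_mem_invForms (B : Subalgebra k A) :
    Coalgebra.counit (R := k) ∈ invForms k A (B : Set A) := by
  intro a b _
  simpa using Bialgebra.counit_mul (R := k) a b

theorem stmt11 (B : Subalgebra k A) (F Finv : A ⊗[k] A)
    (hinv1 : F * Finv = 1) (hinv2 : Finv * F = 1)
    (hcF1 : TensorProduct.lid k A (TensorProduct.map Coalgebra.counit LinearMap.id F) = 1)
    (hcF2 : TensorProduct.rid k A (TensorProduct.map LinearMap.id Coalgebra.counit F) = 1)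
    (hFB : ∀ b ∈ B, F * Coalgebra.comul (R := k) b * Finv ∈ tens2 k A (B : Set A) (B : Set A))
    (hPhi : PhiB k A F Finv ∈ tens3 k A (B : Set A) (B : Set A) (B : Set A))
    -- `F₀` invertible, with `F₀` and `F₀⁻¹` in `B ⊗̄ B`
    (F0 F0inv : A ⊗[k] A)
    (hinv01 : F0 * F0inv = 1) (hinv02 : F0inv * F0 = 1)
    (hF0 : F0 ∈ tens2 k A (B : Set A) (B : Set A))
    (hF0inv : F0inv ∈ tens2 k A (B : Set A) (B : Set A))
    (hcF01 : TensorProduct.lid k A (TensorProduct.map Coalgebra.counit LinearMap.id F0) = 1)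
    (hcF02 : TensorProduct.rid k A (TensorProduct.map LinearMap.id Coalgebra.counit F0) = 1)
    -- `G` is the inverse of `F₀·F`, namely `F⁻¹·F₀⁻¹`
    (G : A ⊗[k] A) (hG1 : (F0 * F) * G = 1) (hG2 : G * (F0 * F) = 1) :
    -- the products defined by `F` and by `F₀·F` coincide on `(A*)^B`
    ∀ ℓ ∈ invForms k A (B : Set A), ∀ ℓ' ∈ invForms k A (B : Set A),
      starProd k A G ℓ ℓ' = starProd k A Finv ℓ ℓ' := by
  intro ℓ hℓ ℓ' hℓ'
  -- G = Finv * F0inv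
  have hGval : G = Finv * F0inv := by
    have h : (F0 * F) * (Finv * F0inv) = 1 := by
      rw [mul_assoc F0 F, ← mul_assoc F Finv, hinv1, one_mul, hinv01]
    calc G = G * ((F0 * F) * (Finv * F0inv)) := by rw [h, mul_one]
    _ = (G * (F0 * F)) * (Finv * F0inv) := (mul_assoc _ _ _).symm
    _ = Finv * F0inv := by rw [hG2, one_mul]
  set ε : A →ₗ[k] k := Coalgebra.counit (R := k)
  have hεinv := counit_mem_invForms k A B
  -- pairForm ε ε F0 = 1
  have hpF0 : pairForm k A ε ε F0 = 1 := by
    have key : ∀ z : A ⊗[k] A, pairForm k A ε ε z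
        = ε (TensorProduct.lid k A (TensorProduct.map ε LinearMap.id z)) := by
      intro z
      induction z using TensorProduct.induction_on with
      | zero => simp
      | tmul a a' => simp [pairForm, ε, smul_eq_mul]
      | add x y hx hy => rw [map_add, hx, hy, map_add, map_add, map_add]
    rw [key, hcF01]
    simp [ε]
  -- pairForm ε ε F0inv = 1
  have hpF0inv : pairForm k A ε ε F0inv = 1 := by
    have h := pairForm_mul_mem k A B ε ε hεinv hεinv F0inv hF0inv F0
    rw [hinv01, hpF0, one_mul] at h
    have h1 : pairForm k A ε ε (1 : A ⊗[k] A) = 1 := by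
      have : (1 : A ⊗[k] A) = (1 : A) ⊗ₜ[k] (1 : A) := rfl
      rw [this]
      simp [pairForm, ε, smul_eq_mul]
    rw [h1] at h
    exact h.symm
  ext a
  simp only [starProd, LinearMap.coe_comp, Function.comp_apply, LinearMap.mulRight_apply]
  rw [hGval, ← mul_assoc,
    pairForm_mul_mem k A B ℓ ℓ' hℓ hℓ' F0inv hF0inv, hpF0inv, mul_one]
end
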